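/- arXiv:2003.12356 — 2 statements merged into one kernel-verified Lean document; each statement's English description precedes it below -/
import Mathlib

section
/- Define, for delays τ ∈ (ℝ₊)^m and a continuous function F : ℂ^m → ℝ, G(τ) := sup_{ω∈ℝ} F(e^{-iωτ₁},…,e^{-iωτₘ}) and the 'strong' value sG(τ) := lim_{ε→0⁺} sup { G(τ') : τ' ∈ B(τ,ε) ∩ (ℝ₊)^m }. Then sG(τ) equals the maximum of F over the m-torus, and in particular sG is independent of τ. -/
/-! A point of the torus is reached exactly, not just approximately, by delays arbitrarily close
to τ: at frequency `ω`, the phase `ω τ'ᵢ` of a delay `τ'ᵢ` with `|τ'ᵢ - τᵢ| ≤ π / ω` can be any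
prescribed value modulo `2π`, so for `ω` large the curve `ω ↦ (e^{-iωτ'ᵢ})ᵢ` passes through the
given point for some `τ'` in any neighbourhood of `τ`. Hence the supremum of `G` over any
neighbourhood of `τ` is the maximum of `F` on the torus; Kronecker's theorem is not needed. -/

open Metric Set

/-- The m-torus, viewed as a subset of ℂ^m. -/
def torus (m : ℕ) : Set (Fin m → ℂ) := {z | ∀ i, ‖z i‖ = 1}

/-- The set of strictly positive delay vectors. -/
def posDelays (m : ℕ) : Set (Fin m → ℝ) := {τ | ∀ i, 0 < τ i}

/-- `G τ = sup_{ω∈ℝ} F(e^{-iωτ₁},…,e^{-iωτₘ})`. -/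
noncomputable def Gval {m : ℕ} (F : (Fin m → ℂ) → ℝ) (τ : Fin m → ℝ) : ℝ :=
  ⨆ ω : ℝ, F (fun i => Complex.exp (-(Complex.I * ω * τ i)))

/-- The strong value `sG(τ) = lim_{ε→0⁺} sup {G(τ') : τ' ∈ B(τ,ε) ∩ (ℝ₊)^m}`;
since the inner supremum is monotone in ε, the limit equals the infimum over ε > 0. -/
noncomputable def sGval {m : ℕ} (F : (Fin m → ℂ) → ℝ) (τ : Fin m → ℝ) : ℝ :=
  ⨅ ε : Ioi (0 : ℝ), sSup (Gval F '' (ball τ (ε : ℝ) ∩ posDelays m))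

open Complex Filter Topology

theorem exists_mem_Ico_exp_neg_mul_I_eq {u : ℂ} (hu : ‖u‖ = 1) (c : ℝ) :
    ∃ s ∈ Ico (c - Real.pi) (c + Real.pi), exp (-(s * I)) = u := by
  have h2π : (0 : ℝ) < 2 * Real.pi := by positivity
  set s := toIcoMod h2π (c - Real.pi) (-arg u)
  have hs : s = -arg u - toIcoDiv h2π (c - Real.pi) (-arg u) * (2 * Real.pi) := by
    linarith [toIcoMod_sub_self_eq_mul h2π (c - Real.pi) (-arg u)]
  refine ⟨s, ?_, ?_⟩
  · simpa [s, two_mul, ← add_assoc] using toIcoMod_mem_Ico h2π (c - Real.pi) (-arg u)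
  · calc exp (-(s * I))
        = exp (arg u * I) * exp (toIcoDiv h2π (c - Real.pi) (-arg u) * (2 * Real.pi * I)) := by
          rw [← Complex.exp_add, hs]; push_cast; ring_nf
      _ = u := by
          rw [exp_int_mul_two_pi_mul_I, mul_one]
          simpa [hu] using norm_mul_exp_arg_mul_I u

/-- `Gval F τ` is definitionally `⨆ ω, F (delayPoint τ ω)`. -/
noncomputable def delayPoint {m : ℕ} (τ : Fin m → ℝ) (ω : ℝ) : Fin m → ℂ :=
  fun i => exp (-(I * ω * τ i))

theorem delayPoint_mem_torus {m : ℕ} (τ : Fin m → ℝ) (ω : ℝ) : delayPoint τ ω ∈ torus m :=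
  fun i => by simp [delayPoint, Complex.norm_exp]

theorem exists_delayPoint_eq_of_mem_nhds {m : ℕ} {τ : Fin m → ℝ} {U : Set (Fin m → ℝ)}
    (hU : U ∈ 𝓝 τ) {z : Fin m → ℂ} (hz : z ∈ torus m) :
    ∃ τ' ∈ U, ∃ ω : ℝ, delayPoint τ' ω = z := by
  obtain ⟨δ, hδ, hball⟩ := Metric.mem_nhds_iff.mp hU
  set ω := 2 * Real.pi / δ
  have hω : 0 < ω := by positivity
  choose s hs hsz using fun i => exists_mem_Ico_exp_neg_mul_I_eq (hz i) (ω * τ i)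
  refine ⟨fun i => s i / ω, hball ?_, ω, funext fun i => ?_⟩
  · have hπ : δ / 2 * ω = Real.pi := by simp only [ω]; field_simp
    have hclose : ∀ i, dist (s i / ω) (τ i) ≤ δ / 2 := fun i => by
      rw [Real.dist_eq, show s i / ω - τ i = (s i - ω * τ i) / ω by field_simp,
        abs_div, abs_of_pos hω, div_le_iff₀ hω, hπ, abs_le]
      exact ⟨by linarith [(hs i).1], by linarith [(hs i).2]⟩
    exact mem_ball.mpr ((dist_pi_le_iff (by positivity)).mpr hclose |>.trans_lt (by linarith))
  · have hω' : (ω : ℂ) ≠ 0 := ofReal_ne_zero.mpr hω.ne'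
    simp only [delayPoint, ← hsz i]
    push_cast
    field_simp

theorem isCompact_torus (m : ℕ) : IsCompact (torus m) := by
  convert isCompact_univ_pi fun _ : Fin m => isCompact_sphere (0 : ℂ) 1
  ext z
  simp [torus, Set.mem_pi]

theorem isOpen_posDelays (m : ℕ) : IsOpen (posDelays m) := by
  convert isOpen_set_pi finite_univ fun (_ : Fin m) _ => isOpen_Ioi (a := (0 : ℝ))
  ext τ
  simp [posDelays, Set.mem_pi]

section

variable {m : ℕ} {F : (Fin m → ℂ) → ℝ}

theorem Gval_le_sSup_image_torus (hF : Continuous F) (τ : Fin m → ℝ) :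
    Gval F τ ≤ sSup (F '' torus m) :=
  ciSup_le fun ω => le_csSup ((isCompact_torus m).image hF).bddAbove
    ⟨_, delayPoint_mem_torus τ ω, rfl⟩

theorem le_Gval (hF : Continuous F) (τ : Fin m → ℝ) (ω : ℝ) :
    F (delayPoint τ ω) ≤ Gval F τ :=
  le_ciSup (((isCompact_torus m).image hF).bddAbove.mono <|
    range_subset_iff.mpr fun ω => mem_image_of_mem F (delayPoint_mem_torus τ ω)) ω

theorem sSup_image_Gval_of_mem_nhds (hF : Continuous F) {τ : Fin m → ℝ}
    {U : Set (Fin m → ℝ)} (hU : U ∈ 𝓝 τ) :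
    sSup (Gval F '' U) = sSup (F '' torus m) := by
  have hbdd : BddAbove (Gval F '' U) :=
    ⟨_, forall_mem_image.mpr fun τ' _ => Gval_le_sSup_image_torus hF τ'⟩
  refine le_antisymm ?_ ?_
  · exact csSup_le ((Filter.nonempty_of_mem hU).image _)
      (forall_mem_image.mpr fun τ' _ => Gval_le_sSup_image_torus hF τ')
  · refine csSup_le ⟨_, _, delayPoint_mem_torus τ 0, rfl⟩ <|
      forall_mem_image.mpr fun z hz => ?_
    obtain ⟨τ', hτ', ω, rfl⟩ := exists_delayPoint_eq_of_mem_nhds hU hz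
    exact (le_Gval hF τ' ω).trans (le_csSup hbdd (mem_image_of_mem _ hτ'))

end

/-- The strong value `sG(τ)` is indeed the limit as ε → 0⁺ of the ball suprema and
it equals the maximum of F over the m-torus; in particular it is independent of τ. -/
theorem strong_value_eq_torus_max {m : ℕ} (F : (Fin m → ℂ) → ℝ) (hF : Continuous F)
    (τ : Fin m → ℝ) (hτ : τ ∈ posDelays m) :
    Filter.Tendsto
        (fun ε : ℝ => sSup (Gval F '' (ball τ ε ∩ posDelays m)))
        (nhdsWithin 0 (Ioi 0)) (nhds (sGval F τ)) ∧
    sGval F τ = sSup (F '' torus m) := by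
  have hball : ∀ ε > 0, sSup (Gval F '' (ball τ ε ∩ posDelays m)) = sSup (F '' torus m) :=
    fun ε hε => sSup_image_Gval_of_mem_nhds hF
      (inter_mem (ball_mem_nhds τ hε) ((isOpen_posDelays m).mem_nhds hτ))
  have hsG : sGval F τ = sSup (F '' torus m) := by
    have : Nonempty (Ioi (0 : ℝ)) := ⟨⟨1, mem_Ioi.mpr one_pos⟩⟩
    rw [sGval, iInf_congr fun ε : Ioi (0 : ℝ) => hball ε ε.2, ciInf_const]
  refine ⟨?_, hsG⟩
  rw [hsG]
  exact tendsto_const_nhds.congr'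
    (eventuallyEq_of_mem self_mem_nhdsWithin fun ε hε => (hball ε hε).symm)
end

section
/- With Tₐ as above and rationally independent delays τ, the H∞ norm equals the torus maximum: sup_{ω∈ℝ} σ₁(Tₐ(iω,τ)) = max_{θ∈[0,2π]^m} σ₁(-C₂ (A₀ + ∑ᵢ Aᵢ e^{-iθᵢ})⁻¹ B₂). -/
/-!
The map `z ↦ σ₁(-C₂ (A₀ + ∑ zᵢ Aᵢ)⁻¹ B₂)` is continuous on the compact torus, which is the image
of `[0, 2π]^m` under `θ ↦ (e^{-iθᵢ})ᵢ`, so it suffices that the curve `ω ↦ (e^{-iωτᵢ})ᵢ` is dense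
in the torus (Kronecker). Density follows from Weyl equidistribution: averages along the curve
converge to the Haar integral, first for characters, where rational independence makes the
frequency `∑ kᵢτᵢ` nonzero, and then for every continuous function, because the characters span a
dense subspace (Stone–Weierstrass) and the averages are `1`-Lipschitz. A nonnegative continuous
function vanishing on the curve but not at some point off its closure would then have zero Haar
integral, which is impossible.
-/

open Set

/-- The largest singular value (operator norm w.r.t. Euclidean norms) of a complex
matrix. -/
noncomputable def sigma1 {p q : ℕ} (M : Matrix (Fin q) (Fin p) ℂ) : ℝ :=
  ‖LinearMap.toContinuousLinearMap (Matrix.toEuclideanLin M)‖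

/-- Rational independence of real numbers τ₁,…,τₘ. -/
def RatIndep {m : ℕ} (τ : Fin m → ℝ) : Prop :=
  ∀ z : Fin m → ℤ, (∑ k, (z k : ℝ) * τ k) = 0 → ∀ k, z k = 0

open Filter Topology MeasureTheory

lemma continuous_sigma1 {p q : ℕ} : Continuous (sigma1 : Matrix (Fin q) (Fin p) ℂ → ℝ) :=
  continuous_norm.comp <| LinearMap.continuous_of_finiteDimensional <|
    LinearMap.toContinuousLinearMap.toLinearMap ∘ₗ
      (Matrix.toEuclideanLin (𝕜 := ℂ) (m := Fin q) (n := Fin p)).toLinearMap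

lemma continuousAt_sigma1_neg_mul_inv_mul {X : Type*} [TopologicalSpace X] {n p q : ℕ}
    {M : X → Matrix (Fin n) (Fin n) ℂ} (B : Matrix (Fin n) (Fin p) ℂ)
    (C : Matrix (Fin q) (Fin n) ℂ) {x : X} (hM : Continuous M) (hx : IsUnit (M x)) :
    ContinuousAt (fun y => sigma1 (-(C * (M y)⁻¹ * B))) x := by
  have hdet : (M x).det ≠ 0 := ((Matrix.isUnit_iff_isUnit_det _).1 hx).ne_zero
  have hinv : ContinuousAt Inv.inv (M x) :=
    continuousAt_matrix_inv _ (by simpa only [Ring.inverse_eq_inv'] using continuousAt_inv₀ hdet)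
  exact continuous_sigma1.continuousAt.comp
    (((continuous_const.matrix_mul continuous_id).matrix_mul continuous_const).neg.continuousAt.comp
      (hinv.comp hM.continuousAt))

theorem DenseRange.ciSup_comp {X Y : Type*} [TopologicalSpace X] [CompactSpace X] [Nonempty Y]
    {f : X → ℝ} (hf : Continuous f) {g : Y → X} (hg : DenseRange g) :
    ⨆ y, f (g y) = ⨆ x, f x := by
  have hbdd : BddAbove (range f) := (isCompact_range hf).bddAbove
  have hbdd' : BddAbove (range (f ∘ g)) := hbdd.mono (range_comp_subset_range g f)
  have : Nonempty X := ⟨g (Classical.arbitrary Y)⟩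
  refine le_antisymm (ciSup_le fun y => le_ciSup hbdd (g y)) (ciSup_le fun x => ?_)
  have hx : f x ∈ closure (range (f ∘ g)) := by
    rw [range_comp]; exact hf.range_subset_closure_image_dense hg (mem_range_self x)
  exact closure_minimal (range_subset_iff.2 fun y => le_ciSup hbdd' y) isClosed_Iic hx

lemma image_exp_neg_mul_I_pi_Icc {m : ℕ} :
    (fun θ : Fin m → ℝ => fun i => Complex.exp (-(Complex.I * θ i))) ''
        pi univ (fun _ => Icc 0 (2 * Real.pi)) =
      range (fun x : Fin m → Circle => fun i => (x i : ℂ)) := by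
  have hperiodic : Function.Periodic (fun t => Circle.exp (-t)) (2 * Real.pi) := fun t => by
    simp only [neg_add, ← sub_eq_add_neg, Circle.exp_sub_two_pi]
  have hcoord (t : ℝ) : Complex.exp (-(Complex.I * t)) = (Circle.exp (-t) : ℂ) := by
    rw [Circle.coe_exp]; push_cast; ring_nf
  have hcircle : (fun t => Circle.exp (-t)) '' Icc 0 (2 * Real.pi) = univ := by
    rw [← zero_add (2 * Real.pi), hperiodic.image_Icc Real.two_pi_pos, range_eq_univ]
    exact fun z => ⟨-_, by simpa using (Circle.exp_surjective z).choose_spec⟩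
  change Pi.map (fun _ : Fin m => fun t : ℝ => Complex.exp (-(Complex.I * t))) '' _ =
    range (Pi.map fun _ : Fin m => ((↑) : Circle → ℂ))
  rw [piMap_image_univ_pi, range_piMap]
  congr! 2 with i
  simp_rw [hcoord]
  rw [← image_image (fun z : Circle => (z : ℂ)) (fun t => Circle.exp (-t)), hcircle, image_univ]
  rfl

lemma tendsto_average_exp_mul_I {s : ℝ} (hs : s ≠ 0) :
    Tendsto (fun T : ℝ => (T : ℂ)⁻¹ * ∫ t in (0 : ℝ)..T, Complex.exp (↑(t * s) * Complex.I))
      atTop (𝓝 0) := by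
  have hc : (s : ℂ) * Complex.I ≠ 0 := mul_ne_zero (by exact_mod_cast hs) Complex.I_ne_zero
  have hbound : ∀ᶠ T : ℝ in atTop,
      ‖(T : ℂ)⁻¹ * ∫ t in (0 : ℝ)..T, Complex.exp (↑(t * s) * Complex.I)‖ ≤ 2 / |s| * T⁻¹ := by
    filter_upwards [eventually_gt_atTop 0] with T hT
    have hint : ∫ t in (0 : ℝ)..T, Complex.exp (↑(t * s) * Complex.I) =
        (Complex.exp (↑(T * s) * Complex.I) - 1) / (s * Complex.I) := by
      simp_rw [show ∀ t : ℝ, (↑(t * s) * Complex.I : ℂ) = s * Complex.I * t from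
        fun t => by push_cast; ring]
      rw [integral_exp_mul_complex hc, Complex.ofReal_zero, mul_zero, Complex.exp_zero]
    have hnum : ‖Complex.exp (↑(T * s) * Complex.I) - 1‖ ≤ 2 :=
      (norm_sub_le _ _).trans (by rw [Complex.norm_exp_ofReal_mul_I, norm_one]; norm_num)
    rw [hint, norm_mul, norm_div, norm_inv, Complex.norm_real, Real.norm_of_nonneg hT.le,
      norm_mul, Complex.norm_I, mul_one, Complex.norm_real, Real.norm_eq_abs, mul_comm]
    gcongr
  exact squeeze_zero_norm' hbound (by simpa using tendsto_inv_atTop_zero.const_mul (2 / |s|))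

noncomputable instance : MeasurableSpace Circle := borel Circle

instance : BorelSpace Circle := ⟨rfl⟩

namespace Torus

variable {m : ℕ}

noncomputable def char (k : Fin m → ℤ) : C(Fin m → Circle, ℂ) :=
  ⟨fun x => ∏ i, ((x i ^ k i : Circle) : ℂ),
    continuous_finsetProd _ fun i _ =>
      continuous_subtype_val.comp ((continuous_apply i).zpow (k i))⟩

lemma char_apply (k : Fin m → ℤ) (x : Fin m → Circle) :
    char k x = ∏ i, ((x i ^ k i : Circle) : ℂ) := rfl

@[simp]
lemma char_zero : char (0 : Fin m → ℤ) = 1 := by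
  ext x; simp [char_apply]

lemma char_add (k l : Fin m → ℤ) : char (k + l) = char k * char l := by
  ext x
  simp only [ContinuousMap.mul_apply, char_apply, ← Finset.prod_mul_distrib, Pi.add_apply,
    zpow_add, Circle.coe_mul]

lemma star_char (k : Fin m → ℤ) : star (char k) = char (-k) := by
  ext x
  simp only [ContinuousMap.star_apply, char_apply, star_prod, Pi.neg_apply, zpow_neg,
    Circle.coe_inv_eq_conj]
  rfl

lemma char_apply_mul (k : Fin m → ℤ) (x y : Fin m → Circle) :
    char k (x * y) = char k x * char k y := by
  simp only [char_apply, ← Finset.prod_mul_distrib, Pi.mul_apply, mul_zpow, Circle.coe_mul]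

lemma char_single_apply (i : Fin m) (x : Fin m → Circle) :
    char (Pi.single i 1) x = x i := by
  rw [char_apply, Finset.prod_eq_single i (fun j _ hj => by simp [Pi.single_eq_of_ne hj])
    (by simp)]
  simp

noncomputable def charAlgebra (m : ℕ) : StarSubalgebra ℂ C(Fin m → Circle, ℂ) where
  toSubalgebra := Algebra.adjoin ℂ (range (char (m := m)))
  star_mem' := by
    change Algebra.adjoin ℂ (range char) ≤ star (Algebra.adjoin ℂ (range char))
    refine Algebra.adjoin_le ?_
    rintro - ⟨k, rfl⟩
    rw [SetLike.mem_coe, Subalgebra.mem_star_iff, star_char]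
    exact Algebra.subset_adjoin ⟨-k, rfl⟩

lemma toSubmodule_charAlgebra :
    Subalgebra.toSubmodule (charAlgebra m).toSubalgebra = Submodule.span ℂ (range char) := by
  refine Algebra.adjoin_eq_span_of_subset _ (subset_trans ?_ Submodule.subset_span)
  intro f hf
  refine Submonoid.closure_induction (fun _ => id) ⟨0, char_zero⟩ ?_ hf
  rintro - - - - ⟨k, rfl⟩ ⟨l, rfl⟩
  exact ⟨k + l, char_add k l⟩

lemma charAlgebra_separatesPoints : (charAlgebra m).SeparatesPoints := by
  intro x y hxy
  obtain ⟨i, hi⟩ := Function.ne_iff.1 hxy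
  refine ⟨_, ⟨char (Pi.single i 1), Algebra.subset_adjoin ⟨_, rfl⟩, rfl⟩, ?_⟩
  simpa only [char_single_apply] using fun h => hi (Circle.coe_injective h)

theorem dense_span_char :
    Dense (Submodule.span ℂ (range (char (m := m))) : Set C(Fin m → Circle, ℂ)) := by
  rw [← toSubmodule_charAlgebra, dense_iff_closure_eq]
  have := congr_arg SetLike.coe
    (ContinuousMap.starSubalgebra_topologicalClosure_eq_top_of_separatesPoints _
      (charAlgebra_separatesPoints (m := m)))
  simpa [StarSubalgebra.topologicalClosure_coe] using this

noncomputable def haar (m : ℕ) : Measure (Fin m → Circle) := Measure.haarMeasure ⊤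

instance : (haar m).IsMulLeftInvariant := by unfold haar; infer_instance

instance : (haar m).IsOpenPosMeasure := by unfold haar; infer_instance

instance : IsProbabilityMeasure (haar m) :=
  ⟨by rw [haar, ← TopologicalSpace.PositiveCompacts.coe_top]; exact Measure.haarMeasure_self⟩

lemma integrable_haar (f : C(Fin m → Circle, ℂ)) : Integrable f (haar m) :=
  f.continuous.integrable_of_hasCompactSupport (isClosed_tsupport _).isCompact

lemma integral_char_of_ne_zero {k : Fin m → ℤ} (hk : k ≠ 0) : ∫ x, char k x ∂haar m = 0 := by
  classical
  obtain ⟨j, hj⟩ := Function.ne_iff.1 hk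
  -- translating by `exp (π / k j)` in the `j`-th coordinate multiplies `char k` by `-1`
  have hy : char k (Pi.mulSingle j (Circle.exp (Real.pi / k j))) = -1 := by
    rw [char_apply, Finset.prod_eq_single j (fun i _ hi => by simp [Pi.mulSingle_eq_of_ne hi])
      (by simp), Pi.mulSingle_eq_same, ← Circle.exp_zsmul, zsmul_eq_mul,
      mul_div_cancel₀ _ (by exact_mod_cast hj), Circle.coe_exp, Complex.exp_pi_mul_I]
  exact integral_eq_zero_of_mul_left_eq_neg fun x => by
    rw [char_apply_mul, hy, neg_one_mul]

lemma lipschitzWith_integral_haar :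
    LipschitzWith 1 fun f : C(Fin m → Circle, ℂ) => ∫ x, f x ∂haar m := by
  refine LipschitzWith.of_dist_le_mul fun f g => ?_
  rw [dist_eq_norm, dist_eq_norm, ← integral_sub (integrable_haar f) (integrable_haar g),
    NNReal.coe_one, one_mul]
  simpa using norm_integral_le_of_norm_le_const (μ := haar m)
    (.of_forall fun x => (f - g).norm_coe_le_norm x)

noncomputable def line (τ : Fin m → ℝ) (t : ℝ) : Fin m → Circle := fun i => Circle.exp (t * τ i)

lemma continuous_line (τ : Fin m → ℝ) : Continuous (line τ) :=
  continuous_pi fun _ => Circle.exp.continuous.comp (continuous_id.mul continuous_const)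

lemma char_line (τ : Fin m → ℝ) (k : Fin m → ℤ) (t : ℝ) :
    char k (line τ t) = Complex.exp (↑(t * ∑ i, k i * τ i) * Complex.I) := by
  simp only [char_apply, line, ← Circle.exp_zsmul, Circle.coe_exp, ← Complex.exp_sum,
    ← Finset.sum_mul, Finset.mul_sum, zsmul_eq_mul]
  push_cast
  congr 2
  exact Finset.sum_congr rfl fun _ _ => by ring

noncomputable def lineAverage (τ : Fin m → ℝ) (T : ℝ) : C(Fin m → Circle, ℂ) →ₗ[ℂ] ℂ where
  toFun f := (T : ℂ)⁻¹ * ∫ t in (0 : ℝ)..T, f (line τ t)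
  map_add' f g := by
    have hint (h : C(Fin m → Circle, ℂ)) : IntervalIntegrable (fun t => h (line τ t)) volume 0 T :=
      (h.continuous.comp (continuous_line τ)).intervalIntegrable _ _
    simp only [ContinuousMap.add_apply, intervalIntegral.integral_add (hint f) (hint g), mul_add]
  map_smul' c f := by
    simp only [ContinuousMap.smul_apply, smul_eq_mul, intervalIntegral.integral_const_mul,
      RingHom.id_apply]
    ring

lemma lineAverage_apply (τ : Fin m → ℝ) (T : ℝ) (f : C(Fin m → Circle, ℂ)) :
    lineAverage τ T f = (T : ℂ)⁻¹ * ∫ t in (0 : ℝ)..T, f (line τ t) := rfl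

lemma norm_lineAverage_le (τ : Fin m → ℝ) (T : ℝ) (f : C(Fin m → Circle, ℂ)) :
    ‖lineAverage τ T f‖ ≤ ‖f‖ := by
  rcases eq_or_ne T 0 with rfl | hT
  · simp [lineAverage_apply]
  have hint : ‖∫ t in (0 : ℝ)..T, f (line τ t)‖ ≤ ‖f‖ * |T - 0| :=
    intervalIntegral.norm_integral_le_of_norm_le_const fun t _ => f.norm_coe_le_norm _
  rw [sub_zero] at hint
  rw [lineAverage_apply, norm_mul, norm_inv, Complex.norm_real, Real.norm_eq_abs]
  calc |T|⁻¹ * ‖∫ t in (0 : ℝ)..T, f (line τ t)‖ ≤ |T|⁻¹ * (‖f‖ * |T|) := by gcongr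
    _ = ‖f‖ := by field_simp

lemma tendsto_lineAverage_char {τ : Fin m → ℝ} (hτ : RatIndep τ) (k : Fin m → ℤ) :
    Tendsto (fun T => lineAverage τ T (char k)) atTop (𝓝 (∫ x, char k x ∂haar m)) := by
  rcases eq_or_ne k 0 with rfl | hk
  · refine tendsto_const_nhds.congr' ?_
    filter_upwards [eventually_ne_atTop 0] with T hT
    simp [lineAverage_apply, hT]
  · have hs : ∑ i, (k i : ℝ) * τ i ≠ 0 := fun h => hk (funext (hτ k h))
    simpa only [integral_char_of_ne_zero hk, lineAverage_apply, char_line]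
      using tendsto_average_exp_mul_I hs

noncomputable def equidistribSubmodule (τ : Fin m → ℝ) : Submodule ℂ C(Fin m → Circle, ℂ) where
  carrier := {f | Tendsto (fun T => lineAverage τ T f) atTop (𝓝 (∫ x, f x ∂haar m))}
  add_mem' {f g} hf hg := by
    simpa only [mem_ofPred_eq, map_add, ContinuousMap.add_apply,
      integral_add (integrable_haar f) (integrable_haar g)] using hf.add hg
  zero_mem' := by simp
  smul_mem' c f hf := by
    simpa only [mem_ofPred_eq, map_smul, ContinuousMap.smul_apply, integral_smul]
      using hf.const_smul c

lemma isClosed_equidistribSubmodule (τ : Fin m → ℝ) :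
    IsClosed (equidistribSubmodule τ : Set C(Fin m → Circle, ℂ)) := by
  refine Equicontinuous.isClosed_setOfPred_tendsto ?_ lipschitzWith_integral_haar.continuous
  refine (LipschitzWith.uniformEquicontinuous _ 1 fun T => ?_).equicontinuous
  simpa using AddMonoidHomClass.lipschitz_of_bound (lineAverage τ T) 1
    (by simpa using norm_lineAverage_le τ T)

/-- Weyl's equidistribution theorem for the linear flow `t ↦ (e^{i t τ_j})_j` on the torus. -/
theorem tendsto_lineAverage {τ : Fin m → ℝ} (hτ : RatIndep τ) (f : C(Fin m → Circle, ℂ)) :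
    Tendsto (fun T => lineAverage τ T f) atTop (𝓝 (∫ x, f x ∂haar m)) := by
  have hspan : Submodule.span ℂ (range char) ≤ equidistribSubmodule τ :=
    Submodule.span_le.2 (range_subset_iff.2 (tendsto_lineAverage_char hτ))
  exact (isClosed_equidistribSubmodule τ).closure_subset (dense_span_char.mono hspan f)

/-- Kronecker's theorem. -/
theorem denseRange_line {τ : Fin m → ℝ} (hτ : RatIndep τ) : DenseRange (line τ) := by
  intro x
  by_contra hx
  have hpos : 0 < Metric.infDist x (range (line τ)) :=
    (Metric.infDist_pos_iff_notMem_closure (range_nonempty _)).1 hx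
  let f : C(Fin m → Circle, ℂ) := ⟨fun y => Metric.infDist y (range (line τ)), by fun_prop⟩
  have hzero : ∫ y, (Metric.infDist y (range (line τ)) : ℂ) ∂haar m = 0 := by
    refine tendsto_nhds_unique (tendsto_lineAverage hτ f) (tendsto_const_nhds.congr fun T => ?_)
    simp [lineAverage_apply, f, Metric.infDist_zero_of_mem (mem_range_self _)]
  refine (Continuous.integral_pos_of_hasCompactSupport_nonneg_nonzero (μ := haar m)
    (Metric.continuous_infDist_pt _) (isClosed_tsupport _).isCompact
    (fun _ => Metric.infDist_nonneg) hpos.ne').ne' ?_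
  rw [integral_complex_ofReal] at hzero
  exact_mod_cast hzero

end Torus

theorem asymp_hinf_eq_torus_max_general {m n p q : ℕ}
    (A₀ : Matrix (Fin n) (Fin n) ℂ) (A : Fin m → Matrix (Fin n) (Fin n) ℂ)
    (B₂ : Matrix (Fin n) (Fin p) ℂ) (C₂ : Matrix (Fin q) (Fin n) ℂ)
    (hinv : ∀ z ∈ torus m, IsUnit (A₀ + ∑ i, z i • A i))
    (τ : Fin m → ℝ) (hτ : RatIndep τ) :
    (⨆ ω : ℝ, sigma1 (-(C₂ *
        (A₀ + ∑ i, Complex.exp (-(Complex.I * ω * τ i)) • A i)⁻¹ * B₂))) =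
    sSup ((fun θ : Fin m → ℝ => sigma1 (-(C₂ *
        (A₀ + ∑ i, Complex.exp (-(Complex.I * θ i)) • A i)⁻¹ * B₂))) ''
      (Set.pi univ fun _ => Icc (0:ℝ) (2 * Real.pi))) := by
  set F : (Fin m → ℂ) → ℝ := fun z => sigma1 (-(C₂ * (A₀ + ∑ i, z i • A i)⁻¹ * B₂))
  have hF : Continuous fun x : Fin m → Circle => F fun i => x i :=
    continuous_iff_continuousAt.2 fun x =>
      continuousAt_sigma1_neg_mul_inv_mul B₂ C₂ (by fun_prop) (hinv _ fun i => (x i).norm_coe)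
  have hline (ω : ℝ) : (fun i => Complex.exp (-(Complex.I * ω * τ i))) =
      fun i => (Torus.line τ (-ω) i : ℂ) := by
    funext i; rw [Torus.line, Circle.coe_exp]; push_cast; ring_nf
  have hdense : DenseRange fun ω : ℝ => Torus.line τ (-ω) :=
    (Torus.denseRange_line hτ).comp neg_surjective.denseRange (Torus.continuous_line τ)
  calc (⨆ ω : ℝ, F fun i => Complex.exp (-(Complex.I * ω * τ i)))
      = ⨆ ω : ℝ, F fun i => Torus.line τ (-ω) i := by simp_rw [hline]
    _ = ⨆ x : Fin m → Circle, F fun i => x i := hdense.ciSup_comp hF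
    _ = sSup (F '' ((fun θ : Fin m → ℝ => fun i => Complex.exp (-(Complex.I * θ i))) ''
          pi univ fun _ => Icc 0 (2 * Real.pi))) := by
      rw [image_exp_neg_mul_I_pi_Icc, ← range_comp]; rfl
    _ = _ := by rw [image_image]

/-- For rationally independent positive delays, the H∞ norm of the asymptotic
transfer function `Tₐ(λ,τ) = -C₂ (A₀ + ∑ᵢ Aᵢ e^{-λτᵢ})⁻¹ B₂` equals the maximum of
`θ ↦ σ₁(-C₂ (A₀ + ∑ᵢ Aᵢ e^{-iθᵢ})⁻¹ B₂)` over `[0,2π]^m`. -/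
theorem asymp_hinf_eq_torus_max {m n p q : ℕ}
    (A₀ : Matrix (Fin n) (Fin n) ℂ) (A : Fin m → Matrix (Fin n) (Fin n) ℂ)
    (B₂ : Matrix (Fin n) (Fin p) ℂ) (C₂ : Matrix (Fin q) (Fin n) ℂ)
    (hinv : ∀ z ∈ torus m, IsUnit (A₀ + ∑ i, z i • A i))
    (τ : Fin m → ℝ) (hτpos : ∀ i, 0 < τ i) (hτ : RatIndep τ) :
    (⨆ ω : ℝ, sigma1 (-(C₂ *
        (A₀ + ∑ i, Complex.exp (-(Complex.I * ω * τ i)) • A i)⁻¹ * B₂))) =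
    sSup ((fun θ : Fin m → ℝ => sigma1 (-(C₂ *
        (A₀ + ∑ i, Complex.exp (-(Complex.I * θ i)) • A i)⁻¹ * B₂))) ''
      (Set.pi univ fun _ => Icc (0:ℝ) (2 * Real.pi))) :=
  asymp_hinf_eq_torus_max_general A₀ A B₂ C₂ hinv τ hτ
end
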